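/- arXiv:1703.03769 — 2 statements merged into one kernel-verified Lean document; each statement's English description precedes it below -/
import Mathlib

section
/- In the setting of the previous chain with Potts potentials, the local-polytope relaxation with the linear projection constraint Σ_u Σ_{x_u} x_u μ_u(x_u) = b has optimal value 0 whenever 0 ≤ b ≤ n: setting μ_u(1) = b/n, μ_u(0) = 1 - b/n for all u and μ_{uv}(x,x) = μ_u(x), μ_{uv}(x,y)=0 for x≠y gives a feasible point of cost 0. Hence for 1 ≤ b ≤ n-1 the relaxation is strictly less than the integer optimum. -/
/-!
Fractional side: put the same marginal `(1 - b/(n+1), b/(n+1))` on every node and couple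
consecutive nodes along the diagonal. The coupling never pays a Potts penalty, so the relaxed
energy is `0` for every `0 ≤ b ≤ n + 1`.

Integral side: a labeling whose consecutive labels all agree is constant, hence has label sum
`0` or `n + 1`; so for `1 ≤ b ≤ n` some edge of the chain is cut and costs `1`.
-/

open Finset

section Coupling

variable {α : Type*} [DecidableEq α]

def diagCoupling (p : α → ℝ) (a a' : α) : ℝ := if a = a' then p a else 0

theorem diagCoupling_nonneg {p : α → ℝ} (hp : ∀ a, 0 ≤ p a) (a a' : α) :
    0 ≤ diagCoupling p a a' := by
  unfold diagCoupling
  split_ifs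
  exacts [hp a, le_rfl]

theorem sum_diagCoupling_left [Fintype α] (p : α → ℝ) (a' : α) :
    ∑ a, diagCoupling p a a' = p a' := by
  simp [diagCoupling]

theorem sum_diagCoupling_right [Fintype α] (p : α → ℝ) (a : α) :
    ∑ a', diagCoupling p a a' = p a := by
  simp [diagCoupling]

theorem sum_potts_mul_diagCoupling [Fintype α] (p : α → ℝ) :
    ∑ a, ∑ a', (if a = a' then (0 : ℝ) else 1) * diagCoupling p a a' = 0 :=
  sum_eq_zero fun a _ => sum_eq_zero fun a' _ => by by_cases h : a = a' <;> simp [diagCoupling, h]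

end Coupling

def bernoulliMarginal (q : ℝ) : Fin 2 → ℝ := ![1 - q, q]

theorem bernoulliMarginal_nonneg {q : ℝ} (hq0 : 0 ≤ q) (hq1 : q ≤ 1) (a : Fin 2) :
    0 ≤ bernoulliMarginal q a := by
  fin_cases a <;> simp [bernoulliMarginal] <;> linarith

theorem sum_bernoulliMarginal (q : ℝ) : ∑ a, bernoulliMarginal q a = 1 := by
  simp [bernoulliMarginal, Fin.sum_univ_two]

section Chain

variable {n : ℕ} {β : Type*}

def chainPottsEnergy [DecidableEq β] (x : Fin (n + 1) → β) : ℝ :=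
  ∑ e : Fin n, if x e.castSucc = x e.succ then (0 : ℝ) else 1

theorem one_le_chainPottsEnergy [DecidableEq β] {x : Fin (n + 1) → β}
    (h : ∃ e : Fin n, x e.castSucc ≠ x e.succ) : 1 ≤ chainPottsEnergy x := by
  obtain ⟨e, he⟩ := h
  calc (1 : ℝ) = if x e.castSucc = x e.succ then (0 : ℝ) else 1 := (if_neg he).symm
    _ ≤ chainPottsEnergy x :=
      single_le_sum (f := fun e : Fin n => if x e.castSucc = x e.succ then (0 : ℝ) else 1)
        (fun i _ => by split_ifs <;> norm_num) (mem_univ e)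

theorem Fin.apply_eq_apply_zero_of_forall_castSucc_eq_succ {x : Fin (n + 1) → β}
    (h : ∀ e : Fin n, x e.castSucc = x e.succ) (i : Fin (n + 1)) : x i = x 0 := by
  induction i using Fin.induction with
  | zero => rfl
  | succ i ih => rw [← h i, ih]

theorem exists_castSucc_ne_succ_of_sum_val {x : Fin (n + 1) → Fin 2}
    (h1 : 1 ≤ ∑ i, ((x i : ℕ) : ℝ)) (hn : ∑ i, ((x i : ℕ) : ℝ) ≤ n) :
    ∃ e : Fin n, x e.castSucc ≠ x e.succ := by
  by_contra! hconst
  have hsum : ∑ i, ((x i : ℕ) : ℝ) = (n + 1) * ((x 0 : ℕ) : ℝ) := by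
    simp [Fin.apply_eq_apply_zero_of_forall_castSucc_eq_succ hconst]
  rw [hsum] at h1 hn
  rcases Fin.exists_fin_two.mp ⟨x 0, rfl⟩ with h0 | h0 <;> simp [h0] at h1 hn <;> linarith

end Chain

theorem stmt_8_general (n : ℕ) (b : ℝ) (hb0 : 0 ≤ b) (hbn : b ≤ n + 1) :
    (∃ (μu : Fin (n + 1) → Fin 2 → ℝ) (μe : Fin n → Fin 2 → Fin 2 → ℝ),
      (∀ u a, 0 ≤ μu u a) ∧ (∀ e a a', 0 ≤ μe e a a') ∧
      (∀ u, ∑ a, μu u a = 1) ∧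
      (∀ e a', ∑ a, μe e a a' = μu e.succ a') ∧
      (∀ e a, ∑ a', μe e a a' = μu e.castSucc a) ∧
      (∑ u, μu u 1 = b) ∧
      (∑ e, ∑ a, ∑ a', (if a = a' then (0 : ℝ) else 1) * μe e a a' = 0)) ∧
    (1 ≤ b → b ≤ n →
      ∀ x : Fin (n + 1) → Fin 2, (∑ i, ((x i : ℕ) : ℝ)) = b →
        (1 : ℝ) ≤ ∑ e : Fin n, (if x e.castSucc = x e.succ then (0 : ℝ) else 1)) := by
  have hpos : (0 : ℝ) < n + 1 := by positivity
  set μ := bernoulliMarginal (b / (n + 1))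
  have hμ : ∀ a, 0 ≤ μ a :=
    bernoulliMarginal_nonneg (by positivity) ((div_le_one hpos).mpr hbn)
  refine ⟨⟨fun _ => μ, fun _ => diagCoupling μ, fun _ => hμ,
    fun _ => diagCoupling_nonneg hμ, fun _ => sum_bernoulliMarginal _,
    fun _ => sum_diagCoupling_left μ, fun _ => sum_diagCoupling_right μ, ?_,
    sum_eq_zero fun _ _ => sum_potts_mul_diagCoupling μ⟩, ?_⟩
  · rw [sum_const, card_univ, Fintype.card_fin, nsmul_eq_mul]
    change ((n + 1 : ℕ) : ℝ) * (b / (n + 1)) = b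
    push_cast
    field_simp
  · intro hb1 hbn' x hx
    exact one_le_chainPottsEnergy (exists_castSucc_ne_succ_of_sum_val (hx ▸ hb1) (hx ▸ hbn'))

/-- For the chain of `n + 1` binary variables with Potts potentials and projection
constraint `Σᵤ μᵤ(1) = b`, the local polytope relaxation has a feasible point of
objective value `0` whenever `0 ≤ b ≤ n + 1` (given by `μᵤ(1) = b/(n+1)` and diagonal
pairwise marginals); moreover, for `1 ≤ b ≤ n` every integral labeling satisfying the
projection constraint has energy at least `1`, so the relaxation is strictly less than
the integer optimum. -/
theorem stmt_8 (n : ℕ) (hn : 1 ≤ n) (b : ℝ) (hb0 : 0 ≤ b) (hbn : b ≤ n + 1) :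
    (∃ (μu : Fin (n + 1) → Fin 2 → ℝ) (μe : Fin n → Fin 2 → Fin 2 → ℝ),
      (∀ u a, 0 ≤ μu u a) ∧ (∀ e a a', 0 ≤ μe e a a') ∧
      (∀ u, ∑ a, μu u a = 1) ∧
      (∀ e a', ∑ a, μe e a a' = μu e.succ a') ∧
      (∀ e a, ∑ a', μe e a a' = μu e.castSucc a) ∧
      (∑ u, μu u 1 = b) ∧
      (∑ e, ∑ a, ∑ a', (if a = a' then (0 : ℝ) else 1) * μe e a a' = 0)) ∧
    (1 ≤ b → b ≤ n →
      ∀ x : Fin (n + 1) → Fin 2, (∑ i, ((x i : ℕ) : ℝ)) = b →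
        (1 : ℝ) ≤ ∑ e : Fin n, (if x e.castSucc = x e.succ then (0 : ℝ) else 1)) :=
  stmt_8_general n b hb0 hbn
end

section
/- Conversely, given consistent counting labels x_{i:j} = (a, s, a'), x_{j+1:l} = (c, t, c'), x_{i:l} = (a, s + a' + c + t, c') with all subsums achievable (s ≤ (j-i-1)(k-1), t ≤ (l-j-2)(k-1)), there exists a full labeling x of [i,l] in {0,...,k-1} inducing exactly these counting labels. -/
/-!
Any `s ≤ #S * (k - 1)` is a sum of labels in `{0, …, k-1}` over `S`: put `min s (k - 1)` on one
point and fill the rest greedily. Filling the two open blocks `(i, j)` and `(j + 1, l)` this way,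
on top of the prescribed boundary labels, gives `x`; the sum over `(i, l)` then splits as the
two block sums plus the labels at `j` and `j + 1`.
-/

open Finset

theorem exists_eqOn_compl_sum_eq {α : Type*} [DecidableEq α] {k : ℕ} (S : Finset α)
    (g : α → Fin k) {s : ℕ} (hs : s ≤ #S * (k - 1)) :
    ∃ f : α → Fin k, (∀ a ∉ S, f a = g a) ∧ ∑ a ∈ S, (f a : ℕ) = s := by
  induction S using Finset.induction_on generalizing s g with
  | empty => exact ⟨g, fun _ _ => rfl, by simp at hs ⊢; omega⟩
  | insert a S ha ih =>
    have hr : min s (k - 1) < k := by have := (g a).isLt; omega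
    have hrest : s - min s (k - 1) ≤ #S * (k - 1) := by
      rw [card_insert_of_notMem ha, add_one_mul] at hs
      omega
    obtain ⟨f, hfg, hfS⟩ := ih (Function.update g a ⟨_, hr⟩) hrest
    have hfa : f a = ⟨_, hr⟩ := by simpa using hfg a ha
    refine ⟨f, fun b hb => ?_, ?_⟩
    · rw [mem_insert, not_or] at hb
      simpa [hb.1] using hfg b hb.2
    · rw [sum_insert ha, hfS, hfa, Fin.val_mk]
      omega

theorem sum_Ioo_eq_sum_Ioo_add_add_sum_Ioo {M : Type*} [AddCommMonoid M] (f : ℕ → M)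
    {i j l : ℕ} (hij : i < j) (hjl : j + 1 < l) :
    ∑ m ∈ Ioo i l, f m = ∑ m ∈ Ioo i j, f m + f j + f (j + 1) + ∑ m ∈ Ioo (j + 1) l, f m := by
  simp only [← Ico_add_one_left_eq_Ioo]
  rw [← sum_Ico_consecutive _ (by omega : i + 1 ≤ j) (by omega : j ≤ l),
    sum_eq_sum_Ico_succ_bot (by omega : j < l), sum_eq_sum_Ico_succ_bot hjl]
  simp only [add_assoc]

theorem stmt_16_general (k i j l s t : ℕ) (hij : i < j) (hjl : j + 1 < l)
    (a a' c c' : Fin k)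
    (hs : s ≤ (j - i - 1) * (k - 1)) (ht : t ≤ (l - j - 2) * (k - 1)) :
    ∃ x : ℕ → Fin k,
      x i = a ∧ x j = a' ∧ x (j + 1) = c ∧ x l = c' ∧
      (∑ m ∈ Finset.Ioo i j, (x m : ℕ)) = s ∧
      (∑ m ∈ Finset.Ioo (j + 1) l, (x m : ℕ)) = t ∧
      (∑ m ∈ Finset.Ioo i l, (x m : ℕ)) = s + (a' : ℕ) + (c : ℕ) + t := by
  set b : ℕ → Fin k := Function.update (Function.update (Function.update
    (Function.update (fun _ => a) j a') (j + 1) c) l c') i a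
  obtain ⟨f₁, hf₁b, hf₁s⟩ := exists_eqOn_compl_sum_eq (s := s) (Ioo i j) b
    (by rwa [Nat.card_Ioo])
  obtain ⟨x, hxf₁, hxt⟩ := exists_eqOn_compl_sum_eq (s := t) (Ioo (j + 1) l) f₁
    (by rwa [Nat.card_Ioo, show l - (j + 1) - 1 = l - j - 2 by omega])
  have hxb : ∀ m, m ∉ Ioo i j → m ∉ Ioo (j + 1) l → x m = b m := fun m h₁ h₂ => by
    rw [hxf₁ m h₂, hf₁b m h₁]
  have hxs : ∑ m ∈ Ioo i j, (x m : ℕ) = s := by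
    rw [← hf₁s]
    refine sum_congr rfl fun m hm => ?_
    rw [hxf₁ m (by simp only [mem_Ioo] at hm ⊢; omega)]
  have hxi : x i = a := (hxb i (by simp) (by simp; omega)).trans (by simp [b])
  have hxj : x j = a' := (hxb j (by simp) (by simp)).trans
    (by simp [b, hij.ne', show j ≠ l by omega])
  have hxj₁ : x (j + 1) = c := (hxb (j + 1) (by simp) (by simp)).trans
    (by simp [b, show j + 1 ≠ i by omega, hjl.ne])
  have hxl : x l = c' := (hxb l (by simp; omega) (by simp)).trans
    (by simp [b, show l ≠ i by omega])
  refine ⟨x, hxi, hxj, hxj₁, hxl, hxs, hxt, ?_⟩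
  rw [sum_Ioo_eq_sum_Ioo_add_add_sum_Ioo _ hij hjl, hxs, hxt, hxj, hxj₁]

/-- Conversely, given consistent counting labels `x_{i:j} = (a, s, a')`,
`x_{j+1:l} = (c, t, c')` and `x_{i:l} = (a, s + a' + c + t, c')` with achievable subsums
(`s ≤ (j-i-1)(k-1)` and `t ≤ (l-j-2)(k-1)`), there exists a full labeling `x` of `[i, l]`
with values in `{0, …, k-1}` inducing exactly these counting labels. -/
theorem stmt_16 (k i j l s t : ℕ) (hk : 1 ≤ k) (hij : i < j) (hjl : j + 1 < l)
    (a a' c c' : Fin k)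
    (hs : s ≤ (j - i - 1) * (k - 1)) (ht : t ≤ (l - j - 2) * (k - 1)) :
    ∃ x : ℕ → Fin k,
      x i = a ∧ x j = a' ∧ x (j + 1) = c ∧ x l = c' ∧
      (∑ m ∈ Finset.Ioo i j, (x m : ℕ)) = s ∧
      (∑ m ∈ Finset.Ioo (j + 1) l, (x m : ℕ)) = t ∧
      (∑ m ∈ Finset.Ioo i l, (x m : ℕ)) = s + (a' : ℕ) + (c : ℕ) + t :=
  stmt_16_general k i j l s t hij hjl a a' c c' hs ht
end
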